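/- arXiv:1004.2134 — 4 statements merged into one kernel-verified Lean document; each statement's English description precedes it below -/
import Mathlib

section
/- Let A be an n×n real matrix such that every eigenvalue of the symmetric matrix A + Aᵀ is strictly negative, and let 2w = max of the eigenvalues of A + Aᵀ (so w < 0). Then every solution of z' = Az with z(0) = z₀ satisfies |z(t)| ≤ e^{wt}|z₀| for all t ≥ 0; in particular the system is exponentially stable. -/
/-!
Along a solution of `z' = A z`, `d/dt |z|² = zᵀ (A + Aᵀ) z ≤ 2w |z|²`: since `2w` bounds the
spectrum of the symmetric matrix `A + Aᵀ`, we have `A + Aᵀ ≤ 2w • 1` in the Loewner order.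
Grönwall's inequality then gives `|z t|² ≤ e^{2wt} |z₀|²`.
-/

open Matrix Real

theorem Matrix.dotProduct_add_transpose_mulVec {ι R : Type*} [Fintype ι] [CommRing R]
    (A : Matrix ι ι R) (x : ι → R) :
    x ⬝ᵥ (A + Aᵀ) *ᵥ x = 2 * (x ⬝ᵥ A *ᵥ x) := by
  rw [add_mulVec, dotProduct_add, mulVec_transpose, dotProduct_comm x (x ᵥ* A),
    ← dotProduct_mulVec, two_mul]

open scoped MatrixOrder in
theorem Matrix.IsHermitian.dotProduct_mulVec_le {ι : Type*} [Fintype ι] [DecidableEq ι]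
    {M : Matrix ι ι ℝ} (hM : M.IsHermitian) {c : ℝ} (hc : ∀ i, hM.eigenvalues i ≤ c)
    (x : ι → ℝ) : x ⬝ᵥ M *ᵥ x ≤ c * (x ⬝ᵥ x) := by
  have hle : M ≤ algebraMap ℝ _ c := le_algebraMap_of_spectrum_le (by
    rintro _ hx
    obtain ⟨i, rfl⟩ := hM.spectrum_real_eq_range_eigenvalues ▸ hx
    exact hc i) hM
  simpa [sub_mulVec, Algebra.algebraMap_eq_smul_one, smul_mulVec] using
    (Matrix.le_iff.mp hle).dotProduct_mulVec_nonneg x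

theorem HasDerivAt.dotProduct {ι : Type*} [Fintype ι] {x y : ℝ → ι → ℝ} {x' y' : ι → ℝ}
    {t : ℝ} (hx : HasDerivAt x x' t) (hy : HasDerivAt y y' t) :
    HasDerivAt (fun s => x s ⬝ᵥ y s) (x' ⬝ᵥ y t + x t ⬝ᵥ y') t := by
  simp only [_root_.dotProduct, ← Finset.sum_add_distrib]
  exact HasDerivAt.fun_sum fun i _ =>
    ((hasDerivAt_pi.mp hx i).mul (hasDerivAt_pi.mp hy i)).congr_deriv (by ring)

theorem le_mul_exp_of_hasDerivAt_le {f f' : ℝ → ℝ} {K t : ℝ}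
    (hf : ∀ s, HasDerivAt f (f' s) s) (bound : ∀ s, f' s ≤ K * f s) (ht : 0 ≤ t) :
    f t ≤ f 0 * exp (K * t) := by
  have := le_gronwallBound_of_liminf_deriv_right_le (ε := 0)
    (fun s _ => (hf s).continuousAt.continuousWithinAt)
    (fun s _ _ hr => (hf s).hasDerivWithinAt.liminf_right_slope_le hr) le_rfl
    (fun s _ => by simpa using bound s) t ⟨ht, le_rfl⟩
  simpa [gronwallBound_ε0] using this

theorem dotProduct_self_le_of_hasDerivAt_mulVec {ι : Type*} [Fintype ι] {A : Matrix ι ι ℝ}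
    {c : ℝ} (hA : ∀ x, x ⬝ᵥ (A + Aᵀ) *ᵥ x ≤ c * (x ⬝ᵥ x)) {z : ℝ → ι → ℝ}
    (hz : ∀ s, HasDerivAt z (A *ᵥ z s) s) {t : ℝ} (ht : 0 ≤ t) :
    z t ⬝ᵥ z t ≤ z 0 ⬝ᵥ z 0 * exp (c * t) := by
  refine le_mul_exp_of_hasDerivAt_le (fun s => (hz s).dotProduct (hz s)) (fun s => ?_) ht
  rw [dotProduct_comm, ← two_mul, ← dotProduct_add_transpose_mulVec]
  exact hA (z s)

/-- Exponential stability of `z' = Az` when all eigenvalues of the symmetric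
matrix `A + Aᵀ` are negative, with `2w` the largest such eigenvalue. -/
theorem exp_stability_symmetric_part (n : ℕ) (A : Matrix (Fin n) (Fin n) ℝ)
    (hsym : (A + A.transpose).IsHermitian)
    (hneg : ∀ i, hsym.eigenvalues i < 0)
    (w : ℝ) (hw : IsGreatest (Set.range hsym.eigenvalues) (2 * w))
    (z₀ : Fin n → ℝ) (z : ℝ → (Fin n → ℝ))
    (hz : ∀ t : ℝ, HasDerivAt z (A.mulVec (z t)) t) (hz0 : z 0 = z₀) :
    w < 0 ∧ ∀ t : ℝ, 0 ≤ t →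
      Real.sqrt (∑ i, (z t i) ^ 2) ≤ Real.exp (w * t) * Real.sqrt (∑ i, (z₀ i) ^ 2) := by
  obtain ⟨⟨i, hi⟩, hmax⟩ := hw
  refine ⟨by linarith [hneg i], fun t ht => ?_⟩
  have hquad (x : Fin n → ℝ) : x ⬝ᵥ (A + Aᵀ) *ᵥ x ≤ 2 * w * (x ⬝ᵥ x) :=
    hsym.dotProduct_mulVec_le (fun j => hmax ⟨j, rfl⟩) x
  have hsq (x : Fin n → ℝ) : ∑ i, x i ^ 2 = x ⬝ᵥ x := by simp only [dotProduct, sq]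
  have hexp : exp (2 * w * t) = exp (w * t) ^ 2 := by rw [← exp_nat_mul]; ring_nf
  calc √(∑ i, z t i ^ 2) ≤ √((∑ i, z₀ i ^ 2) * exp (2 * w * t)) := by
        rw [hsq, hsq, ← hz0]
        exact sqrt_le_sqrt (dotProduct_self_le_of_hasDerivAt_mulVec hquad hz ht)
    _ = exp (w * t) * √(∑ i, z₀ i ^ 2) := by
        rw [hexp, sqrt_mul' _ (sq_nonneg _), sqrt_sq (exp_pos _).le, mul_comm]
end

section
/- Let A be an n×n real matrix with ‖e^{At}‖ ≤ M e^{−wt} for all t ≥ 0, where M, w > 0, and let f : Ω → ℝⁿ be locally Lipschitz on an open set Ω ∋ 0 with |f(y)| ≤ L|y| for all y ∈ Ω. If LM − w < 0, then there exists ρ > 0 such that every solution y(·, λ) of y' = Ay + f(y) with y(0) = λ ∈ B(0,ρ) is defined on [0,∞) and satisfies lim_{t→∞} y(t,λ) = 0; moreover |y(t,λ)| ≤ M|λ| e^{(LM−w)t}. -/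
/-!
By variation of constants, a solution of `y' = A y + q` satisfies
`y t = e^{tA} y 0 + ∫₀ᵗ e^{(t-s)A} q s ds`; if `‖q‖ ≤ L ‖y‖`, then `u t = e^{wt} ‖y t‖` satisfies
`u t ≤ M ‖y 0‖ + L M ∫₀ᵗ u`, and Grönwall's inequality gives `‖y t‖ ≤ M ‖y 0‖ e^{(LM - w) t}`.
This applies as long as `y` stays in a ball of radius `r` on which `f` is Lipschitz and bounded by
`L ‖y‖`. Composing the vector field with the radial retraction onto that ball makes it bounded and
globally Lipschitz, so its solutions exist for all `t ≥ 0`. If `M ‖y 0‖ < r`, the estimate keeps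
such a solution strictly inside the ball, where the truncation changes nothing.
-/

open Set Filter Topology NNReal NormedSpace intervalIntegral

theorem le_mul_exp_of_le_add_mul_integral {u : ℝ → ℝ} {a K T : ℝ} (hK : 0 ≤ K)
    (hu : ContinuousOn u (Icc 0 T)) (hle : ∀ t ∈ Icc 0 T, u t ≤ a + K * ∫ s in 0..t, u s) :
    ∀ t ∈ Icc 0 T, u t ≤ a * Real.exp (K * t) := by
  set G : ℝ → ℝ := fun t => ∫ s in 0..t, u s
  have hG : ∀ t ∈ Icc 0 T, HasDerivWithinAt G (u t) (Icc 0 T) t := fun t ht =>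
    have : Fact (t ∈ Icc 0 T) := ⟨ht⟩
    integral_hasDerivWithinAt_right
      ((hu.mono (Icc_subset_Icc_right ht.2)).intervalIntegrable_of_Icc ht.1)
      (hu.stronglyMeasurableAtFilter_nhdsWithin measurableSet_Icc t) (hu t ht)
  have hGle := le_gronwallBound_of_liminf_deriv_right_le (f := G) (δ := 0) (ε := a)
    (fun t ht => (hG t ht).continuousWithinAt)
    (fun t ht _ hr => ((hG t (Ico_subset_Icc_self ht)).mono_of_mem_nhdsWithin
      (Icc_mem_nhdsGE_of_mem ht)).liminf_right_slope_le hr)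
    (by simp [G]) (fun t ht => by linarith [hle t (Ico_subset_Icc_self ht)])
  intro t ht
  calc u t ≤ a + K * G t := hle t ht
    _ ≤ a + K * gronwallBound 0 K a t := by gcongr; simpa using hGle t ht
    _ = a * Real.exp (K * t) := by
      rcases hK.eq_or_lt with rfl | hK
      · simp
      · rw [gronwallBound_of_K_ne_0 hK.ne']
        field_simp
        ring

theorem ContinuousOn.forall_lt_of_bootstrap {g : ℝ → ℝ} {r : ℝ} (hg : ContinuousOn g (Ici 0))
    (h0 : g 0 < r) (hstep : ∀ T, 0 ≤ T → (∀ s ∈ Icc 0 T, g s ≤ r) → g T < r) :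
    ∀ t, 0 ≤ t → g t < r := by
  by_contra! ⟨t, ht, hrt⟩
  set S := Ici 0 ∩ g ⁻¹' Ici r
  have hbdd : BddBelow S := ⟨0, fun s hs => hs.1⟩
  have hT : sInf S ∈ S :=
    (hg.preimage_isClosed_of_isClosed isClosed_Ici isClosed_Ici).csInf_mem ⟨t, ht, hrt⟩ hbdd
  obtain ⟨c, hc, hgc⟩ := intermediate_value_Icc hT.1 (hg.mono Icc_subset_Ici_self) ⟨h0.le, hT.2⟩
  have hcT : c = sInf S := le_antisymm hc.2 (csInf_le hbdd ⟨hc.1, hgc.ge⟩)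
  refine (hstep _ hT.1 fun s hs => ?_).not_ge hT.2
  rcases hs.2.lt_or_eq with hs' | rfl
  · exact le_of_not_gt fun h => (csInf_le hbdd ⟨hs.1, h.le⟩).not_gt hs'
  · exact hcT ▸ hgc.le

section

variable {E : Type*} [NormedAddCommGroup E] [NormedSpace ℝ E]

theorem ContinuousLinearMap.eq_exp_smul_add_integral [CompleteSpace E] (B : E →L[ℝ] E)
    {y q : ℝ → E} {t : ℝ} (ht : 0 ≤ t)
    (hy : ∀ s ∈ Icc 0 t, HasDerivWithinAt y (B (y s) + q s) (Icc 0 t) s)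
    (hq : ContinuousOn q (Icc 0 t)) :
    y t = exp (t • B) (y 0) + ∫ s in 0..t, exp ((t - s) • B) (q s) := by
  set P : ℝ → E →L[ℝ] E := fun s => exp ((t - s) • B)
  have hP : ∀ s, HasDerivAt P (-(exp ((t - s) • B) * B)) s := fun s =>
    ((hasDerivAt_exp_smul_const (𝕂 := ℝ) B (t - s)).scomp s
      ((hasDerivAt_id s).const_sub t)).congr_deriv (by simp)
  have hPc : Continuous P := continuous_iff_continuousAt.2 fun s => (hP s).continuousAt
  -- the `B (y s)` terms cancel in the derivative of `s ↦ e^{(t - s) B} (y s)`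
  have hPy : ∀ s ∈ Ioo 0 t, HasDerivAt (fun s => P s (y s)) (P s (q s)) s := fun s hs => by
    convert (hP s).clm_apply ((hy s (Ioo_subset_Icc_self hs)).hasDerivAt
      (Icc_mem_nhds hs.1 hs.2)) using 1
    simp [P]
  have hFTC := integral_eq_sub_of_hasDeriv_right_of_le ht
    (hPc.continuousOn.clm_apply fun s hs => (hy s hs).continuousWithinAt)
    (fun s hs => (hPy s hs).hasDerivWithinAt)
    ((hPc.continuousOn.clm_apply hq).intervalIntegrable_of_Icc ht)
  simp only [P, sub_self, zero_smul, exp_zero, sub_zero, one_apply_eq_self] at hFTC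
  rw [hFTC]
  abel

theorem ContinuousLinearMap.norm_le_of_hasDerivWithinAt_add [CompleteSpace E] {B : E →L[ℝ] E}
    {M w L T : ℝ} (hM : 0 ≤ M)
    (hB : ∀ t, 0 ≤ t → ∀ v, ‖exp (t • B) v‖ ≤ M * Real.exp (-w * t) * ‖v‖)
    {y q : ℝ → E} (hy : ∀ t ∈ Icc 0 T, HasDerivWithinAt y (B (y t) + q t) (Icc 0 T) t)
    (hq : ContinuousOn q (Icc 0 T)) (hqy : ∀ t ∈ Icc 0 T, ‖q t‖ ≤ L * ‖y t‖) :
    ∀ t ∈ Icc 0 T, ‖y t‖ ≤ M * ‖y 0‖ * Real.exp ((L * M - w) * t) := by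
  rcases lt_or_ge L 0 with hL | hL
  · intro t ht
    have : ‖y t‖ ≤ 0 := by nlinarith [hqy t ht, norm_nonneg (q t), norm_nonneg (y t)]
    exact this.trans (by positivity)
  have hyc : ContinuousOn y (Icc 0 T) := fun t ht => (hy t ht).continuousWithinAt
  set u : ℝ → ℝ := fun s => Real.exp (w * s) * ‖y s‖
  have hu : ContinuousOn u (Icc 0 T) := by fun_prop
  have hyu : ∀ t ∈ Icc 0 T,
      ‖y t‖ ≤ Real.exp (-w * t) * (M * ‖y 0‖ + L * M * ∫ s in 0..t, u s) := by
    intro t ht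
    have hsub : Icc 0 t ⊆ Icc 0 T := Icc_subset_Icc_right ht.2
    have hint : ‖∫ s in 0..t, exp ((t - s) • B) (q s)‖ ≤
        Real.exp (-w * t) * (L * M * ∫ s in 0..t, u s) := by
      rw [← integral_const_mul, ← integral_const_mul]
      refine norm_integral_le_of_norm_le ht.1 (MeasureTheory.ae_of_all _ fun s hs => ?_)
        ((continuousOn_const.mul (continuousOn_const.mul (hu.mono hsub))).intervalIntegrable_of_Icc
          ht.1)
      calc ‖exp ((t - s) • B) (q s)‖ ≤ M * Real.exp (-w * (t - s)) * ‖q s‖ :=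
            hB _ (sub_nonneg.2 hs.2) _
        _ ≤ M * Real.exp (-w * (t - s)) * (L * ‖y s‖) := by
            gcongr; exact hqy s (hsub (Ioc_subset_Icc_self hs))
        _ = Real.exp (-w * t) * (L * M * u s) := by
            simp only [u]; rw [show -w * (t - s) = -w * t + w * s by ring, Real.exp_add]; ring
    rw [B.eq_exp_smul_add_integral ht.1 (fun s hs => (hy s (hsub hs)).mono hsub) (hq.mono hsub)]
    calc _ ≤ ‖exp (t • B) (y 0)‖ + ‖∫ s in 0..t, exp ((t - s) • B) (q s)‖ := norm_add_le _ _
      _ ≤ M * Real.exp (-w * t) * ‖y 0‖ + Real.exp (-w * t) * (L * M * ∫ s in 0..t, u s) :=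
          add_le_add (hB t ht.1 _) hint
      _ = _ := by ring
  have hgron := le_mul_exp_of_le_add_mul_integral (mul_nonneg hL hM) hu fun t ht => by
    have := mul_le_mul_of_nonneg_left (hyu t ht) (Real.exp_pos (w * t)).le
    rwa [← mul_assoc, ← Real.exp_add, show w * t + -w * t = 0 by ring, Real.exp_zero,
      one_mul] at this
  intro t ht
  calc ‖y t‖ = Real.exp (-w * t) * u t := by
        rw [← mul_assoc, ← Real.exp_add, show -w * t + w * t = 0 by ring, Real.exp_zero, one_mul]
    _ ≤ Real.exp (-w * t) * (M * ‖y 0‖ * Real.exp (L * M * t)) := by gcongr; exact hgron t ht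
    _ = _ := by rw [mul_left_comm, ← Real.exp_add]; ring_nf

noncomputable def radialRetraction (r : ℝ) (x : E) : E := (r / max r ‖x‖) • x

theorem norm_radialRetraction_le {r : ℝ} (hr : 0 ≤ r) (x : E) : ‖radialRetraction r x‖ ≤ r := by
  rw [radialRetraction, norm_smul, Real.norm_of_nonneg (by positivity), div_mul_eq_mul_div]
  rcases hr.eq_or_lt with rfl | hr
  · simp
  exact div_le_of_le_mul₀ (by positivity) hr.le
    (mul_le_mul_of_nonneg_left (le_max_right _ _) hr.le)

theorem radialRetraction_of_norm_le {r : ℝ} {x : E} (hx : ‖x‖ ≤ r) : radialRetraction r x = x := by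
  rcases eq_or_ne x 0 with rfl | hx0
  · simp [radialRetraction]
  rw [radialRetraction, max_eq_left hx, div_self ((norm_pos_iff.2 hx0).trans_le hx).ne', one_smul]

theorem norm_smul_sub_smul_le {a b : ℝ} {x y : E} (ha : 0 ≤ a) (ha1 : a ≤ 1) (hab : a ≤ b)
    (h : (b - a) * ‖y‖ ≤ ‖x‖ - ‖y‖) : ‖a • x - b • y‖ ≤ 2 * ‖x - y‖ := by
  have : a • x - b • y = a • (x - y) - (b - a) • y := by
    rw [smul_sub, sub_smul]; abel
  calc ‖a • x - b • y‖ ≤ a * ‖x - y‖ + (b - a) * ‖y‖ := by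
        rw [this]
        refine (norm_sub_le _ _).trans_eq ?_
        rw [norm_smul, norm_smul, Real.norm_of_nonneg ha, Real.norm_of_nonneg (sub_nonneg.2 hab)]
    _ ≤ ‖x - y‖ + (‖x‖ - ‖y‖) := by gcongr; exact mul_le_of_le_one_left (norm_nonneg _) ha1
    _ ≤ 2 * ‖x - y‖ := by linarith [norm_sub_norm_le x y]

theorem lipschitzWith_radialRetraction {r : ℝ} (hr : 0 ≤ r) :
    LipschitzWith 2 (radialRetraction (E := E) r) := by
  refine LipschitzWith.of_dist_le_mul fun x y => ?_
  wlog hyx : ‖y‖ ≤ ‖x‖ generalizing x y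
  · rw [dist_comm, dist_comm x]; exact this y x (le_of_not_ge hyx)
  rw [dist_eq_norm, dist_eq_norm, NNReal.coe_ofNat]
  rcases hr.eq_or_lt with rfl | hr
  · simp [radialRetraction]
  have hmx : 0 < max r ‖x‖ := hr.trans_le (le_max_left _ _)
  have hmy : 0 < max r ‖y‖ := hr.trans_le (le_max_left _ _)
  apply norm_smul_sub_smul_le (by positivity)
    ((div_le_one hmx).2 (le_max_left _ _))
    (div_le_div_of_nonneg_left hr.le hmy (max_le_max le_rfl hyx))
  rcases le_total ‖x‖ r with hx | hx
  · simp [max_eq_left hx, max_eq_left (hyx.trans hx), hyx]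
  have hx0 : 0 < ‖x‖ := hr.trans_le hx
  rw [max_eq_right hx]
  rcases le_total ‖y‖ r with hy | hy
  · rw [max_eq_left hy, div_self hr.ne', one_sub_div hx0.ne', div_mul_eq_mul_div, div_le_iff₀ hx0]
    nlinarith [norm_nonneg y]
  · have hy0 : 0 < ‖y‖ := hr.trans_le hy
    rw [max_eq_right hy, div_sub_div _ _ hy0.ne' hx0.ne', div_mul_eq_mul_div,
      div_le_iff₀ (by positivity)]
    nlinarith [mul_nonneg (mul_nonneg (sub_nonneg.2 hyx) hy0.le) (sub_nonneg.2 hx)]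

theorem hasDerivWithinAt_Ici_of_forall_nat {y y' : ℝ → E}
    (hy : ∀ k : ℕ, ∀ t ∈ Icc (k : ℝ) (k + 1), HasDerivWithinAt y (y' t) (Icc (k : ℝ) (k + 1)) t)
    {t : ℝ} (ht : 0 ≤ t) : HasDerivWithinAt y (y' t) (Ici 0) t := by
  obtain ⟨k, hkt, htk⟩ : ∃ k : ℕ, (k : ℝ) ≤ t ∧ t < k + 1 :=
    ⟨⌊t⌋₊, Nat.floor_le ht, Nat.lt_floor_add_one t⟩
  rcases hkt.lt_or_eq with hkt | rfl
  · exact ((hy k t ⟨hkt.le, htk.le⟩).hasDerivAt (Icc_mem_nhds hkt htk)).hasDerivWithinAt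
  have hright : HasDerivWithinAt y (y' k) (Ici (k : ℝ)) k :=
    (hy k k ⟨le_rfl, htk.le⟩).mono_of_mem_nhdsWithin (Icc_mem_nhdsGE htk)
  rcases k with _ | m
  · simpa using hright
  have hleft : HasDerivWithinAt y (y' (m + 1 : ℕ)) (Iic ((m + 1 : ℕ) : ℝ)) (m + 1 : ℕ) :=
    (hy m _ ⟨by push_cast; linarith, by push_cast; rfl⟩).mono_of_mem_nhdsWithin
      (by push_cast; exact Icc_mem_nhdsLE (by linarith))
  have := hleft.union hright
  rw [Iic_union_Ici, hasDerivWithinAt_univ] at this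
  exact this.hasDerivWithinAt

theorem exists_hasDerivWithinAt_Icc_add_one_of_lipschitzWith [CompleteSpace E] {F : E → E}
    {K : ℝ≥0} (hF : LipschitzWith K F) {C : ℝ≥0} (hFC : ∀ x, ‖F x‖ ≤ C) (a : ℝ) (x₀ : E) :
    ∃ z : ℝ → E, z a = x₀ ∧
      ∀ t ∈ Icc a (a + 1), HasDerivWithinAt z (F (z t)) (Icc a (a + 1)) t :=
  (IsPicardLindelof.of_time_independent (t₀ := ⟨a, le_rfl, by linarith⟩) (x₀ := x₀) (a := C)
    (r := 0) (fun x _ => hFC x) hF.lipschitzOnWith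
    (by simp)).exists_eq_forall_mem_Icc_hasDerivWithinAt₀

theorem exists_forall_hasDerivWithinAt_Ici_of_lipschitzWith [CompleteSpace E] {F : E → E}
    {K : ℝ≥0} (hF : LipschitzWith K F) {C : ℝ} (hFC : ∀ x, ‖F x‖ ≤ C) (x₀ : E) :
    ∃ y : ℝ → E, y 0 = x₀ ∧ ∀ t, 0 ≤ t → HasDerivWithinAt y (F (y t)) (Ici 0) t := by
  lift C to ℝ≥0 using (norm_nonneg _).trans (hFC x₀)
  choose z hz₀ hz using fun k : ℕ =>
    exists_hasDerivWithinAt_Icc_add_one_of_lipschitzWith hF hFC k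
  -- `x k` is the state at time `k`, where the piece `z k (x k)` on `[k, k + 1]` starts
  let x : ℕ → E := fun k => Nat.rec x₀ (fun k xk => z k xk (k + 1)) k
  let y : ℝ → E := fun t => z ⌊t⌋₊ (x ⌊t⌋₊) t
  have hyz : ∀ k : ℕ, EqOn y (z k (x k)) (Icc k (k + 1)) := by
    intro k t ⟨hkt, htk⟩
    rcases htk.lt_or_eq with htk | rfl
    · simp only [y, (Nat.floor_eq_iff ((k.cast_nonneg).trans hkt)).2 ⟨hkt, htk⟩]
    · have : ⌊(k : ℝ) + 1⌋₊ = k + 1 := by exact_mod_cast Nat.floor_natCast (k + 1)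
      have hk₁ := hz₀ (k + 1) (x (k + 1))
      push_cast at hk₁
      simp only [y, this, hk₁]
      rfl
  refine ⟨y, by simpa [y, x] using hz₀ 0 x₀, fun t ht =>
    hasDerivWithinAt_Ici_of_forall_nat (y' := fun s => F (y s)) (fun k s hs => ?_) ht⟩
  rw [hyz k hs]
  exact (hz k (x k) s hs).congr (hyz k) (hyz k hs)

theorem ContinuousLinearMap.exists_solution_norm_le_mul_exp [CompleteSpace E] {B : E →L[ℝ] E}
    {M w L : ℝ} (hM : 0 ≤ M)
    (hB : ∀ t, 0 ≤ t → ∀ v, ‖exp (t • B) v‖ ≤ M * Real.exp (-w * t) * ‖v‖)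
    {f : E → E} {r : ℝ} {K : ℝ≥0} (hf_lip : LipschitzOnWith K f (Metric.closedBall 0 r))
    (hf : ∀ y ∈ Metric.closedBall (0 : E) r, ‖f y‖ ≤ L * ‖y‖) (hLMw : L * M - w < 0)
    {x₀ : E} (hx₀ : M * ‖x₀‖ < r) :
    ∃ y : ℝ → E, y 0 = x₀ ∧ ∀ t, 0 ≤ t → ‖y t‖ < r ∧
      HasDerivWithinAt y (B (y t) + f (y t)) (Ici 0) t ∧
      ‖y t‖ ≤ M * ‖x₀‖ * Real.exp ((L * M - w) * t) := by
  have hr : 0 ≤ r := (by positivity : 0 ≤ M * ‖x₀‖).trans hx₀.le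
  have hx₀r : ‖x₀‖ < r := by simpa using (hB 0 le_rfl x₀).trans_lt (by simpa using hx₀)
  set G : E → E := fun v => B v + f v
  have hG : LipschitzOnWith (‖B‖₊ + K) G (Metric.closedBall 0 r) :=
    B.lipschitz.lipschitzOnWith.add hf_lip
  have hπ : MapsTo (radialRetraction r) univ (Metric.closedBall (0 : E) r) := fun x _ =>
    mem_closedBall_zero_iff.2 (norm_radialRetraction_le hr x)
  have hF :=
    lipschitzOnWith_univ.1 (hG.comp (lipschitzWith_radialRetraction hr).lipschitzOnWith hπ)
  have hFC : ∀ x, ‖(G ∘ radialRetraction r) x‖ ≤ ‖G 0‖ + (‖B‖₊ + K) * r := fun x => by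
    have := hG.norm_sub_le (hπ (mem_univ x)) (Metric.mem_closedBall_self hr)
    rw [sub_zero] at this
    calc ‖(G ∘ radialRetraction r) x‖ ≤ ‖G 0‖ + ‖G (radialRetraction r x) - G 0‖ :=
          norm_le_norm_add_norm_sub' _ _
      _ ≤ ‖G 0‖ + (‖B‖₊ + K) * r := by
          grw [this, norm_radialRetraction_le hr x]; push_cast; rfl
  obtain ⟨y, hy₀, hy⟩ := exists_forall_hasDerivWithinAt_Ici_of_lipschitzWith hF hFC x₀
  have hyc : ContinuousOn y (Ici 0) := fun t ht => (hy t ht).continuousWithinAt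
  have hyG : ∀ t, 0 ≤ t → ‖y t‖ ≤ r → HasDerivWithinAt y (G (y t)) (Ici 0) t :=
    fun t ht hyt => by simpa [radialRetraction_of_norm_le hyt] using hy t ht
  have hbound : ∀ T, (∀ s ∈ Icc 0 T, ‖y s‖ ≤ r) →
      ∀ t ∈ Icc 0 T, ‖y t‖ ≤ M * ‖x₀‖ * Real.exp ((L * M - w) * t) := fun T hT => by
    have hmaps : MapsTo y (Icc 0 T) (Metric.closedBall 0 r) := fun s hs =>
      mem_closedBall_zero_iff.2 (hT s hs)
    simpa [hy₀] using B.norm_le_of_hasDerivWithinAt_add hM hB (q := fun s => f (y s))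
      (fun t ht => (hyG t ht.1 (hT t ht)).mono Icc_subset_Ici_self)
      (hf_lip.continuousOn.comp (hyc.mono Icc_subset_Ici_self) hmaps)
      (fun t ht => hf _ (hmaps ht))
  have hsmall : ∀ t, 0 ≤ t → ‖y t‖ < r := by
    refine hyc.norm.forall_lt_of_bootstrap (by rwa [hy₀]) fun T hT hyT => ?_
    calc ‖y T‖ ≤ M * ‖x₀‖ * Real.exp ((L * M - w) * T) := hbound T hyT T ⟨hT, le_rfl⟩
      _ ≤ M * ‖x₀‖ := mul_le_of_le_one_right (by positivity)
          (Real.exp_le_one_iff.2 (mul_nonpos_of_nonpos_of_nonneg hLMw.le hT))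
      _ < r := hx₀
  exact ⟨y, hy₀, fun t ht => ⟨hsmall t ht, hyG t ht (hsmall t ht).le,
    hbound t (fun s hs => (hsmall s hs.1).le) t ⟨ht, le_rfl⟩⟩⟩

end

open scoped Matrix.Norms.Operator in
theorem Matrix.exp_mulVec_eq_exp_apply {ι : Type*} [Fintype ι] [DecidableEq ι]
    {A : Matrix ι ι ℝ} {B : (ι → ℝ) →L[ℝ] (ι → ℝ)} (hAB : ∀ v, B v = A.mulVec v) (v : ι → ℝ) :
    (exp A).mulVec v = exp B v := by
  let Ψ := (Matrix.toLinAlgEquiv' (R := ℝ) (n := ι)).trans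
    (Module.End.toContinuousLinearMap (ι → ℝ))
  have hB : B = Ψ A :=
    ContinuousLinearMap.ext fun v => (hAB v).trans (Matrix.toLin'_apply A v).symm
  rw [hB, ← NormedSpace.map_exp Ψ Ψ.toLinearMap.continuous_of_finiteDimensional A]
  rfl

theorem poincare_lyapunov_general (n : ℕ) (A : Matrix (Fin n) (Fin n) ℝ)
    (M w L : ℝ) (hMpos : 0 < M)
    (hA : ∀ t : ℝ, 0 ≤ t → ∀ v : Fin n → ℝ,
      ‖(NormedSpace.exp (t • A)).mulVec v‖ ≤ M * Real.exp (-w * t) * ‖v‖)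
    (Ω : Set (Fin n → ℝ)) (hΩ : IsOpen Ω) (h0Ω : (0 : Fin n → ℝ) ∈ Ω)
    (f : (Fin n → ℝ) → (Fin n → ℝ))
    (hlip : ∀ y ∈ Ω, ∃ ε > 0, ∃ K : NNReal, LipschitzOnWith K f (Metric.ball y ε ∩ Ω))
    (hf : ∀ y ∈ Ω, ‖f y‖ ≤ L * ‖y‖)
    (hLMw : L * M - w < 0) :
    ∃ ρ > 0, ∀ lam ∈ Metric.ball (0 : Fin n → ℝ) ρ,
      ∃ y : ℝ → (Fin n → ℝ), y 0 = lam ∧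
        (∀ t ∈ Set.Ici (0 : ℝ), y t ∈ Ω ∧
          HasDerivWithinAt y (A.mulVec (y t) + f (y t)) (Set.Ici 0) t) ∧
        Filter.Tendsto y Filter.atTop (nhds 0) ∧
        ∀ t ∈ Set.Ici (0 : ℝ), ‖y t‖ ≤ M * ‖lam‖ * Real.exp ((L * M - w) * t) := by
  obtain ⟨ε, hε, K, hK⟩ := hlip 0 h0Ω
  obtain ⟨δ, hδ, hδΩ⟩ := Metric.isOpen_iff.1 hΩ 0 h0Ω
  set r := min ε δ / 2
  have hrΩ : Metric.closedBall (0 : Fin n → ℝ) r ⊆ Metric.ball 0 ε ∩ Ω := fun x hx =>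
    have hx' := Metric.closedBall_subset_ball (half_lt_self (lt_min hε hδ)) hx
    ⟨Metric.ball_subset_ball (min_le_left _ _) hx',
      hδΩ (Metric.ball_subset_ball (min_le_right _ _) hx')⟩
  set B := LinearMap.toContinuousLinearMap (Matrix.toLin' A)
  have hAB : ∀ v, B v = A.mulVec v := Matrix.toLin'_apply A
  have hB : ∀ t, 0 ≤ t → ∀ v, ‖exp (t • B) v‖ ≤ M * Real.exp (-w * t) * ‖v‖ := fun t ht v => by
    rw [← Matrix.exp_mulVec_eq_exp_apply (A := t • A) fun v => by simp [hAB, Matrix.smul_mulVec]]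
    exact hA t ht v
  refine ⟨r / M, by positivity, fun lam hlam => ?_⟩
  have hMlam : M * ‖lam‖ < r := by
    rwa [mem_ball_zero_iff, lt_div_iff₀' hMpos] at hlam
  obtain ⟨y, hy₀, hy⟩ := B.exists_solution_norm_le_mul_exp hMpos.le hB (hK.mono hrΩ)
    (fun v hv => hf v (hrΩ hv).2) hLMw hMlam
  refine ⟨y, hy₀, fun t ht => ⟨(hrΩ (mem_closedBall_zero_iff.2 (hy t ht).1.le)).2,
    hAB (y t) ▸ (hy t ht).2.1⟩, ?_, fun t ht => (hy t ht).2.2⟩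
  refine squeeze_zero_norm' ((eventually_ge_atTop 0).mono fun t ht => (hy t ht).2.2) ?_
  simpa using (Real.tendsto_exp_atBot.comp
    ((tendsto_const_mul_atBot_of_neg hLMw).2 tendsto_id)).const_mul (M * ‖lam‖)

/-- Poincaré–Lyapunov theorem: asymptotic stability of the origin for the
perturbed system `y' = Ay + f(y)` when `‖e^{At}‖ ≤ M e^{-wt}` and
`|f(y)| ≤ L|y|` with `LM - w < 0`. -/
theorem poincare_lyapunov (n : ℕ) (A : Matrix (Fin n) (Fin n) ℝ)
    (M w L : ℝ) (hMpos : 0 < M) (hwpos : 0 < w)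
    (hA : ∀ t : ℝ, 0 ≤ t → ∀ v : Fin n → ℝ,
      ‖(NormedSpace.exp (t • A)).mulVec v‖ ≤ M * Real.exp (-w * t) * ‖v‖)
    (Ω : Set (Fin n → ℝ)) (hΩ : IsOpen Ω) (h0Ω : (0 : Fin n → ℝ) ∈ Ω)
    (f : (Fin n → ℝ) → (Fin n → ℝ))
    (hlip : ∀ y ∈ Ω, ∃ ε > 0, ∃ K : NNReal, LipschitzOnWith K f (Metric.ball y ε ∩ Ω))
    (hf : ∀ y ∈ Ω, ‖f y‖ ≤ L * ‖y‖)
    (hLMw : L * M - w < 0) :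
    ∃ ρ > 0, ∀ lam ∈ Metric.ball (0 : Fin n → ℝ) ρ,
      ∃ y : ℝ → (Fin n → ℝ), y 0 = lam ∧
        (∀ t ∈ Set.Ici (0 : ℝ), y t ∈ Ω ∧
          HasDerivWithinAt y (A.mulVec (y t) + f (y t)) (Set.Ici 0) t) ∧
        Filter.Tendsto y Filter.atTop (nhds 0) ∧
        ∀ t ∈ Set.Ici (0 : ℝ), ‖y t‖ ≤ M * ‖lam‖ * Real.exp ((L * M - w) * t) :=
  poincare_lyapunov_general n A M w L hMpos hA Ω hΩ h0Ω f hlip hf hLMw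
end

section
/- Let f : I × Λ × G → ℝⁿ be continuous and locally Lipschitz in y ∈ G, where I ⊆ ℝ, Λ ⊆ ℝᵐ, G ⊆ ℝⁿ are open. Fix x₀ ∈ I, y₀ ∈ G, a compact Σ ⊆ Λ, and a, b > 0 with [x₀−a, x₀+a] ⊆ I and the closed ball B(y₀,b) ⊆ G. Let M = max{|f(x,λ,y)| : x ∈ [x₀−a,x₀+a], λ ∈ Σ, y ∈ B(y₀,b)} and α = min(a, b/M). Then there exists a unique continuous y : [x₀−α, x₀+α] × Σ → B(y₀,b), continuously differentiable in x, with y(x₀,λ) = y₀ and ∂y/∂x(x,λ) = f(x,λ,y(x,λ)) for all x and λ. -/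
/-!
For each fixed parameter, the Picard–Lindelöf theorem gives a solution on `[x₀ - α, x₀ + α]`
that stays in the ball, because `M α ≤ b`. By Grönwall's inequality, two solutions whose
right-hand sides differ by at most `δ` stay within `gronwallBound 0 L δ (2α)` of each other, and
this tends to `0` with `δ`. Uniform continuity of `f` on compact sets therefore makes the solution
continuous in the parameter at each fixed time, while a bound on `f` makes it Lipschitz in time
uniformly in the parameter; together these give joint continuity. Taking `δ = 0` gives uniqueness.
-/

open Set Metric Filter Topology
open scoped NNReal

section Gronwall

variable {E : Type*} [NormedAddCommGroup E] [NormedSpace ℝ E]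
  {v : ℝ → E → E} {s : Set E} {K : ℝ≥0} {f g f' g' : ℝ → E} {a b t₀ εf εg : ℝ}

theorem dist_le_of_approx_trajectories_ODE_of_mem_Icc_right (ht₀ : t₀ ∈ Icc a b)
    (hv : ∀ t ∈ Icc a b, LipschitzOnWith K (v t) s)
    (hf : ∀ t ∈ Icc a b, HasDerivWithinAt f (f' t) (Icc a b) t)
    (f_bound : ∀ t ∈ Icc a b, dist (f' t) (v t (f t)) ≤ εf)
    (hfs : ∀ t ∈ Icc a b, f t ∈ s)
    (hg : ∀ t ∈ Icc a b, HasDerivWithinAt g (g' t) (Icc a b) t)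
    (g_bound : ∀ t ∈ Icc a b, dist (g' t) (v t (g t)) ≤ εg)
    (hgs : ∀ t ∈ Icc a b, g t ∈ s) (h₀ : f t₀ = g t₀) :
    ∀ t ∈ Icc t₀ b, dist (f t) (g t) ≤ gronwallBound 0 K (εf + εg) (t - t₀) := by
  have hsub : Icc t₀ b ⊆ Icc a b := Icc_subset_Icc_left ht₀.1
  have hsub' : Ico t₀ b ⊆ Icc a b := Ico_subset_Icc_self.trans hsub
  have hcont {φ φ' : ℝ → E} (hφ : ∀ t ∈ Icc a b, HasDerivWithinAt φ (φ' t) (Icc a b) t) :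
      ContinuousOn φ (Icc t₀ b) :=
    fun t ht ↦ (hφ t (hsub ht)).continuousWithinAt.mono hsub
  have hIci {φ φ' : ℝ → E} (hφ : ∀ t ∈ Icc a b, HasDerivWithinAt φ (φ' t) (Icc a b) t) :
      ∀ t ∈ Ico t₀ b, HasDerivWithinAt φ (φ' t) (Ici t) t :=
    fun t ht ↦ (hφ t (hsub' ht)).mono_of_mem_nhdsWithin
      (Icc_mem_nhdsGE_of_mem ⟨ht₀.1.trans ht.1, ht.2⟩)
  exact dist_le_of_approx_trajectories_ODE_of_mem (s := fun _ ↦ s)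
    (fun t ht ↦ hv t (hsub' ht)) (hcont hf) (hIci hf) (fun t ht ↦ f_bound t (hsub' ht))
    (fun t ht ↦ hfs t (hsub' ht)) (hcont hg) (hIci hg) (fun t ht ↦ g_bound t (hsub' ht))
    (fun t ht ↦ hgs t (hsub' ht)) (dist_le_zero.2 h₀)

theorem dist_le_of_approx_trajectories_ODE_of_mem_Icc_left (ht₀ : t₀ ∈ Icc a b)
    (hv : ∀ t ∈ Icc a b, LipschitzOnWith K (v t) s)
    (hf : ∀ t ∈ Icc a b, HasDerivWithinAt f (f' t) (Icc a b) t)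
    (f_bound : ∀ t ∈ Icc a b, dist (f' t) (v t (f t)) ≤ εf)
    (hfs : ∀ t ∈ Icc a b, f t ∈ s)
    (hg : ∀ t ∈ Icc a b, HasDerivWithinAt g (g' t) (Icc a b) t)
    (g_bound : ∀ t ∈ Icc a b, dist (g' t) (v t (g t)) ≤ εg)
    (hgs : ∀ t ∈ Icc a b, g t ∈ s) (h₀ : f t₀ = g t₀) :
    ∀ t ∈ Icc a t₀, dist (f t) (g t) ≤ gronwallBound 0 K (εf + εg) (t₀ - t) := by
  have hneg : MapsTo Neg.neg (Icc (-b) (-a)) (Icc a b) :=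
    fun u hu ↦ ⟨le_neg.mp hu.2, neg_le.mp hu.1⟩
  have hrev {φ φ' : ℝ → E} (hφ : ∀ t ∈ Icc a b, HasDerivWithinAt φ (φ' t) (Icc a b) t) :
      ∀ u ∈ Icc (-b) (-a), HasDerivWithinAt (φ ∘ Neg.neg) (-φ' (-u)) (Icc (-b) (-a)) u :=
    fun u hu ↦ by
      simpa using (hφ (-u) (hneg hu)).scomp u (hasDerivAt_neg u).hasDerivWithinAt hneg
  intro t ht
  simpa [neg_add_eq_sub] using dist_le_of_approx_trajectories_ODE_of_mem_Icc_right
    (v := fun u z ↦ -v (-u) z) ⟨neg_le_neg ht₀.2, neg_le_neg ht₀.1⟩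
    (fun u hu ↦ (hv _ (hneg hu)).neg)
    (hrev hf) (fun u hu ↦ by simpa [dist_neg_neg] using f_bound _ (hneg hu))
    (fun u hu ↦ hfs _ (hneg hu))
    (hrev hg) (fun u hu ↦ by simpa [dist_neg_neg] using g_bound _ (hneg hu))
    (fun u hu ↦ hgs _ (hneg hu)) (by simpa using h₀) (-t) ⟨neg_le_neg ht.2, neg_le_neg ht.1⟩

theorem dist_le_of_approx_trajectories_ODE_of_mem_Icc (ht₀ : t₀ ∈ Icc a b)
    (hεf : 0 ≤ εf) (hεg : 0 ≤ εg)
    (hv : ∀ t ∈ Icc a b, LipschitzOnWith K (v t) s)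
    (hf : ∀ t ∈ Icc a b, HasDerivWithinAt f (f' t) (Icc a b) t)
    (f_bound : ∀ t ∈ Icc a b, dist (f' t) (v t (f t)) ≤ εf)
    (hfs : ∀ t ∈ Icc a b, f t ∈ s)
    (hg : ∀ t ∈ Icc a b, HasDerivWithinAt g (g' t) (Icc a b) t)
    (g_bound : ∀ t ∈ Icc a b, dist (g' t) (v t (g t)) ≤ εg)
    (hgs : ∀ t ∈ Icc a b, g t ∈ s) (h₀ : f t₀ = g t₀) :
    ∀ t ∈ Icc a b, dist (f t) (g t) ≤ gronwallBound 0 K (εf + εg) (b - a) := by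
  have hmono := gronwallBound_mono le_rfl (add_nonneg hεf hεg) K.2
  intro t ht
  rcases le_total t t₀ with htt | htt
  · exact (dist_le_of_approx_trajectories_ODE_of_mem_Icc_left ht₀ hv hf f_bound hfs hg g_bound
      hgs h₀ t ⟨ht.1, htt⟩).trans (hmono (by linarith [ht.1, ht₀.2]))
  · exact (dist_le_of_approx_trajectories_ODE_of_mem_Icc_right ht₀ hv hf f_bound hfs hg g_bound
      hgs h₀ t ⟨htt, ht.2⟩).trans (hmono (by linarith [ht.2, ht₀.1]))

theorem ODE_solution_unique_of_mem_Icc_of_hasDerivWithinAt (ht₀ : t₀ ∈ Icc a b)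
    (hv : ∀ t ∈ Icc a b, LipschitzOnWith K (v t) s)
    (hf : ∀ t ∈ Icc a b, HasDerivWithinAt f (v t (f t)) (Icc a b) t)
    (hfs : ∀ t ∈ Icc a b, f t ∈ s)
    (hg : ∀ t ∈ Icc a b, HasDerivWithinAt g (v t (g t)) (Icc a b) t)
    (hgs : ∀ t ∈ Icc a b, g t ∈ s) (h₀ : f t₀ = g t₀) :
    EqOn f g (Icc a b) := fun t ht ↦ by
  have := dist_le_of_approx_trajectories_ODE_of_mem_Icc ht₀ le_rfl le_rfl hv hf
    (fun _ _ ↦ (dist_self _).le) hfs hg (fun _ _ ↦ (dist_self _).le) hgs h₀ t ht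
  rwa [add_zero, gronwallBound_ε0_δ0, dist_le_zero] at this

end Gronwall

theorem IsPicardLindelof.exists_eq_forall_mem_Icc_hasDerivWithinAt_mem_closedBall₀
    {E : Type*} [NormedAddCommGroup E] [NormedSpace ℝ E] [CompleteSpace E]
    {f : ℝ → E → E} {tmin tmax : ℝ} {t₀ : Icc tmin tmax} {x₀ : E} {a L K : ℝ≥0}
    (hf : IsPicardLindelof f t₀ x₀ a 0 L K) :
    ∃ α : ℝ → E, α t₀ = x₀ ∧
      (∀ t ∈ Icc tmin tmax, HasDerivWithinAt α (f t (α t)) (Icc tmin tmax) t) ∧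
      ∀ t, α t ∈ closedBall x₀ a := by
  obtain ⟨α, hα⟩ := ODE.FunSpace.exists_isFixedPt_next hf (mem_closedBall_self le_rfl)
  refine ⟨α.compProj, by rw [ODE.FunSpace.compProj_val]; exact α.apply_of_zero, fun t ht ↦ ?_,
    fun _ ↦ α.compProj_mem_closedBall hf.mul_max_le⟩
  apply ODE.hasDerivWithinAt_picard_Icc t₀.2 hf.continuousOn_uncurry
    α.continuous_compProj.continuousOn (fun _ _ ↦ α.compProj_mem_closedBall hf.mul_max_le)
    x₀ ht |>.congr_of_mem _ ht
  intro t' ht'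
  nth_rw 1 [← hα]
  rw [ODE.FunSpace.compProj_of_mem ht', ODE.FunSpace.next_apply]

section Parameters

variable {P E : Type*} [TopologicalSpace P] [NormedAddCommGroup E] [NormedSpace ℝ E]
  {f : ℝ → P → E → E} {y : ℝ → P → E} {S : Set P} {s : Set E} {K : ℝ≥0} {a b t₀ : ℝ} {y₀ : E}

theorem continuousOn_param_of_hasDerivWithinAt (hs : IsCompact s) (ht₀ : t₀ ∈ Icc a b)
    (hf : ContinuousOn (fun p : ℝ × P × E ↦ f p.1 p.2.1 p.2.2) (Icc a b ×ˢ S ×ˢ s))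
    (hlip : ∀ lam ∈ S, ∀ t ∈ Icc a b, LipschitzOnWith K (f t lam) s)
    (hy₀ : ∀ lam ∈ S, y t₀ lam = y₀)
    (hy : ∀ lam ∈ S, ∀ t ∈ Icc a b, HasDerivWithinAt (y · lam) (f t lam (y t lam)) (Icc a b) t)
    (hys : ∀ lam ∈ S, ∀ t ∈ Icc a b, y t lam ∈ s) {x : ℝ} (hx : x ∈ Icc a b) :
    ContinuousOn (y x) S := by
  intro μ hμ
  rw [ContinuousWithinAt, Metric.tendsto_nhds]
  intro ε hε
  obtain ⟨δ, hδε, hδ⟩ : ∃ δ, gronwallBound 0 K (δ + 0) (b - a) < ε ∧ 0 < δ := by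
    have hlim : Tendsto (fun δ ↦ gronwallBound 0 K (δ + 0) (b - a)) (𝓝 0) (𝓝 0) := by
      simpa using (gronwallBound_continuous_ε 0 K (b - a)).tendsto' 0 0 (gronwallBound_ε0_δ0 _ _)
    exact (((hlim.eventually (gt_mem_nhds hε)).filter_mono
      (nhdsWithin_le_nhds (s := Ioi 0))).and self_mem_nhdsWithin).exists
  have hF : ContinuousOn (fun q : P × ℝ × E ↦ f q.2.1 q.1 q.2.2) (S ×ˢ Icc a b ×ˢ s) :=
    hf.comp (f := fun q : P × ℝ × E ↦ (q.2.1, q.1, q.2.2)) (by fun_prop)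
      fun q hq ↦ ⟨hq.2.1, hq.1, hq.2.2⟩
  obtain ⟨V, hV, hVF⟩ := (isCompact_Icc.prod hs).mem_uniformity_of_prod
    (f := fun lam (p : ℝ × E) ↦ f p.1 lam p.2) hF hμ (Metric.dist_mem_uniformity hδ)
  filter_upwards [hV, self_mem_nhdsWithin] with lam hlamV hlam
  calc dist (y x lam) (y x μ) ≤ gronwallBound 0 K (δ + 0) (b - a) :=
        dist_le_of_approx_trajectories_ODE_of_mem_Icc ht₀ hδ.le le_rfl (hlip μ hμ) (hy lam hlam)
          (fun t ht ↦ (hVF lam hlamV (t, y t lam) ⟨ht, hys lam hlam t ht⟩).le)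
          (hys lam hlam) (hy μ hμ) (fun _ _ ↦ (dist_self _).le) (hys μ hμ)
          ((hy₀ lam hlam).trans (hy₀ μ hμ).symm) x hx
    _ < ε := hδε

theorem continuousOn_uncurry_of_hasDerivWithinAt (hS : IsCompact S) (hs : IsCompact s)
    (ht₀ : t₀ ∈ Icc a b)
    (hf : ContinuousOn (fun p : ℝ × P × E ↦ f p.1 p.2.1 p.2.2) (Icc a b ×ˢ S ×ˢ s))
    (hlip : ∀ lam ∈ S, ∀ t ∈ Icc a b, LipschitzOnWith K (f t lam) s)
    (hy₀ : ∀ lam ∈ S, y t₀ lam = y₀)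
    (hy : ∀ lam ∈ S, ∀ t ∈ Icc a b, HasDerivWithinAt (y · lam) (f t lam (y t lam)) (Icc a b) t)
    (hys : ∀ lam ∈ S, ∀ t ∈ Icc a b, y t lam ∈ s) :
    ContinuousOn (fun p : ℝ × P ↦ y p.1 p.2) (Icc a b ×ˢ S) := by
  obtain ⟨C, hC⟩ := (isCompact_Icc.prod (hS.prod hs)).exists_bound_of_continuousOn hf
  refine continuousOn_prod_of_continuousOn_lipschitzOnWith _ C.toNNReal
    (fun x hx ↦ continuousOn_param_of_hasDerivWithinAt hs ht₀ hf hlip hy₀ hy hys hx)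
    fun lam hlam ↦ (convex_Icc a b).lipschitzOnWith_of_nnnorm_hasDerivWithin_le (hy lam hlam)
      fun t ht ↦ ?_
  rw [← NNReal.coe_le_coe, coe_nnnorm]
  exact (hC (t, lam, y t lam) ⟨ht, hlam, hys lam hlam t ht⟩).trans (Real.le_coe_toNNReal C)

end Parameters

lemma mul_min_div_le (a : ℝ) {b M : ℝ} (hb : 0 ≤ b) (hM : 0 ≤ M) : M * min a (b / M) ≤ b := by
  rcases hM.eq_or_lt with rfl | hM
  · simpa using hb
  · calc M * min a (b / M) ≤ M * (b / M) := by gcongr; exact min_le_right _ _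
      _ = b := mul_div_cancel₀ b hM.ne'

theorem cauchy_lipschitz_with_parameters_general (n m : ℕ)
    (I : Set ℝ) (Λ : Set (Fin m → ℝ)) (G : Set (Fin n → ℝ))
    (f : ℝ → (Fin m → ℝ) → (Fin n → ℝ) → (Fin n → ℝ))
    (hf : ContinuousOn (fun p : ℝ × (Fin m → ℝ) × (Fin n → ℝ) => f p.1 p.2.1 p.2.2)
      (I ×ˢ Λ ×ˢ G))
    (hlip : ∀ (J : Set ℝ) (P : Set (Fin m → ℝ)) (K : Set (Fin n → ℝ)),
      IsCompact J → IsCompact P → IsCompact K → J ⊆ I → P ⊆ Λ → K ⊆ G →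
      ∃ L > 0, ∀ x ∈ J, ∀ lam ∈ P, ∀ y₁ ∈ K, ∀ y₂ ∈ K,
        ‖f x lam y₁ - f x lam y₂‖ ≤ L * ‖y₁ - y₂‖)
    (x₀ : ℝ) (y₀ : Fin n → ℝ) (S : Set (Fin m → ℝ))
    (hSc : IsCompact S) (hSΛ : S ⊆ Λ)
    (a b M α : ℝ) (ha : 0 < a) (hb : 0 < b)
    (hIa : Set.Icc (x₀ - a) (x₀ + a) ⊆ I)
    (hBG : Metric.closedBall y₀ b ⊆ G)
    (hM : IsGreatest {r : ℝ | ∃ x ∈ Set.Icc (x₀ - a) (x₀ + a), ∃ lam ∈ S,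
      ∃ y ∈ Metric.closedBall y₀ b, r = ‖f x lam y‖} M)
    (hα : α = min a (b / M)) :
    ∃ y : ℝ → (Fin m → ℝ) → (Fin n → ℝ),
      ContinuousOn (fun p : ℝ × (Fin m → ℝ) => y p.1 p.2)
        (Set.Icc (x₀ - α) (x₀ + α) ×ˢ S) ∧
      (∀ lam ∈ S, y x₀ lam = y₀) ∧
      (∀ x ∈ Set.Icc (x₀ - α) (x₀ + α), ∀ lam ∈ S, y x lam ∈ Metric.closedBall y₀ b) ∧
      (∀ lam ∈ S, ∀ x ∈ Set.Icc (x₀ - α) (x₀ + α),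
        HasDerivWithinAt (fun s => y s lam) (f x lam (y x lam))
          (Set.Icc (x₀ - α) (x₀ + α)) x) ∧
      ∀ y' : ℝ → (Fin m → ℝ) → (Fin n → ℝ),
        (∀ lam ∈ S, y' x₀ lam = y₀) →
        (∀ x ∈ Set.Icc (x₀ - α) (x₀ + α), ∀ lam ∈ S,
          y' x lam ∈ Metric.closedBall y₀ b) →
        (∀ lam ∈ S, ∀ x ∈ Set.Icc (x₀ - α) (x₀ + α),
          HasDerivWithinAt (fun s => y' s lam) (f x lam (y' x lam))
            (Set.Icc (x₀ - α) (x₀ + α)) x) →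
        ∀ x ∈ Set.Icc (x₀ - α) (x₀ + α), ∀ lam ∈ S, y' x lam = y x lam := by
  obtain ⟨L, hL, hLf⟩ := hlip _ _ _ isCompact_Icc hSc (isCompact_closedBall y₀ b) hIa hSΛ hBG
  have hM0 : 0 ≤ M := by obtain ⟨_, -, _, -, _, -, h⟩ := hM.1; exact h ▸ norm_nonneg _
  have hα0 : 0 ≤ α := hα ▸ le_min ha.le (div_nonneg hb.le hM0)
  have hαa : α ≤ a := hα ▸ min_le_left _ _
  have hJ : Icc (x₀ - α) (x₀ + α) ⊆ Icc (x₀ - a) (x₀ + a) :=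
    Icc_subset_Icc (by linarith) (by linarith)
  have hx₀J : x₀ ∈ Icc (x₀ - α) (x₀ + α) := ⟨by linarith, by linarith⟩
  have hfJ : ∀ lam ∈ S, ∀ t ∈ Icc (x₀ - α) (x₀ + α),
      LipschitzOnWith ⟨L, hL.le⟩ (f t lam) (closedBall y₀ b) := fun lam hlam t ht ↦
    LipschitzOnWith.of_dist_le_mul fun z hz w hw ↦ by
      rw [dist_eq_norm, dist_eq_norm]
      exact hLf t (hJ ht) lam hlam z hz w hw
  have hPL : ∀ lam ∈ S, IsPicardLindelof (fun t ↦ f t lam) ⟨x₀, hx₀J⟩ y₀ ⟨b, hb.le⟩ 0 ⟨M, hM0⟩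
      ⟨L, hL.le⟩ := fun lam hlam ↦
    { lipschitzOnWith := hfJ lam hlam
      continuousOn := fun z hz ↦ hf.comp (f := fun t ↦ (t, lam, z)) (by fun_prop)
        fun t ht ↦ ⟨hIa (hJ ht), hSΛ hlam, hBG hz⟩
      norm_le := fun t ht z hz ↦ hM.2 ⟨t, hJ ht, lam, hlam, z, hz, rfl⟩
      mul_max_le := by
        change M * max (x₀ + α - x₀) (x₀ - (x₀ - α)) ≤ b - 0
        simpa [hα] using mul_min_div_le a hb.le hM0 }
  choose! y hyx₀ hy hyb using fun lam hlam ↦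
    (hPL lam hlam).exists_eq_forall_mem_Icc_hasDerivWithinAt_mem_closedBall₀
  refine ⟨fun x lam ↦ y lam x, continuousOn_uncurry_of_hasDerivWithinAt hSc
    (isCompact_closedBall y₀ b) hx₀J (hf.mono (prod_mono (hJ.trans hIa) (prod_mono hSΛ hBG)))
    hfJ hyx₀ hy (fun lam hlam t _ ↦ hyb lam hlam t), hyx₀, fun x _ lam hlam ↦ hyb lam hlam x,
    hy, ?_⟩
  intro y' hy'₀ hy'b hy' x hx lam hlam
  exact ODE_solution_unique_of_mem_Icc_of_hasDerivWithinAt hx₀J (hfJ lam hlam) (hy' lam hlam)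
    (fun t ht ↦ hy'b t ht lam hlam) (hy lam hlam) (fun t _ ↦ hyb lam hlam t)
    ((hy'₀ lam hlam).trans (hyx₀ lam hlam).symm) hx

/-- Cauchy–Lipschitz (Picard–Lindelöf) theorem with parameters. -/
theorem cauchy_lipschitz_with_parameters (n m : ℕ)
    (I : Set ℝ) (Λ : Set (Fin m → ℝ)) (G : Set (Fin n → ℝ))
    (hI : IsOpen I) (hΛ : IsOpen Λ) (hG : IsOpen G)
    (f : ℝ → (Fin m → ℝ) → (Fin n → ℝ) → (Fin n → ℝ))
    (hf : ContinuousOn (fun p : ℝ × (Fin m → ℝ) × (Fin n → ℝ) => f p.1 p.2.1 p.2.2)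
      (I ×ˢ Λ ×ˢ G))
    (hlip : ∀ (J : Set ℝ) (P : Set (Fin m → ℝ)) (K : Set (Fin n → ℝ)),
      IsCompact J → IsCompact P → IsCompact K → J ⊆ I → P ⊆ Λ → K ⊆ G →
      ∃ L > 0, ∀ x ∈ J, ∀ lam ∈ P, ∀ y₁ ∈ K, ∀ y₂ ∈ K,
        ‖f x lam y₁ - f x lam y₂‖ ≤ L * ‖y₁ - y₂‖)
    (x₀ : ℝ) (y₀ : Fin n → ℝ) (S : Set (Fin m → ℝ))
    (hx₀ : x₀ ∈ I) (hy₀ : y₀ ∈ G) (hSc : IsCompact S) (hSΛ : S ⊆ Λ)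
    (a b M α : ℝ) (ha : 0 < a) (hb : 0 < b)
    (hIa : Set.Icc (x₀ - a) (x₀ + a) ⊆ I)
    (hBG : Metric.closedBall y₀ b ⊆ G)
    (hM : IsGreatest {r : ℝ | ∃ x ∈ Set.Icc (x₀ - a) (x₀ + a), ∃ lam ∈ S,
      ∃ y ∈ Metric.closedBall y₀ b, r = ‖f x lam y‖} M)
    (hα : α = min a (b / M)) :
    ∃ y : ℝ → (Fin m → ℝ) → (Fin n → ℝ),
      ContinuousOn (fun p : ℝ × (Fin m → ℝ) => y p.1 p.2)
        (Set.Icc (x₀ - α) (x₀ + α) ×ˢ S) ∧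
      (∀ lam ∈ S, y x₀ lam = y₀) ∧
      (∀ x ∈ Set.Icc (x₀ - α) (x₀ + α), ∀ lam ∈ S, y x lam ∈ Metric.closedBall y₀ b) ∧
      (∀ lam ∈ S, ∀ x ∈ Set.Icc (x₀ - α) (x₀ + α),
        HasDerivWithinAt (fun s => y s lam) (f x lam (y x lam))
          (Set.Icc (x₀ - α) (x₀ + α)) x) ∧
      ∀ y' : ℝ → (Fin m → ℝ) → (Fin n → ℝ),
        (∀ lam ∈ S, y' x₀ lam = y₀) →
        (∀ x ∈ Set.Icc (x₀ - α) (x₀ + α), ∀ lam ∈ S,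
          y' x lam ∈ Metric.closedBall y₀ b) →
        (∀ lam ∈ S, ∀ x ∈ Set.Icc (x₀ - α) (x₀ + α),
          HasDerivWithinAt (fun s => y' s lam) (f x lam (y' x lam))
            (Set.Icc (x₀ - α) (x₀ + α)) x) →
        ∀ x ∈ Set.Icc (x₀ - α) (x₀ + α), ∀ lam ∈ S, y' x lam = y x lam :=
  cauchy_lipschitz_with_parameters_general n m I Λ G f hf hlip x₀ y₀ S hSc hSΛ a b M α ha hb hIa hBG
    hM hα
end

section
/- Let φ : ℝ → ℝ be continuous and bounded and define u(t,x) = (4πt)^{−1/2} ∫_ℝ φ(ξ) exp(−(x−ξ)²/(4t)) dξ for t > 0. Then u satisfies ∂_t u(t,x) = ∂²_x u(t,x) for all t > 0, x ∈ ℝ, and lim_{t→0⁺} u(t,x) = φ(x) for every x ∈ ℝ. -/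
/-!
Write `u t x = ∫ φ ξ * G t (x - ξ)` with the heat kernel `G t y = (4πt)^(-1/2) exp (-y² / (4t))`,
which itself satisfies `∂ₜ G = ∂²ᵧ G`. Near any `t > 0` the kernel and its first two space
derivatives are dominated by `(1 + y²) exp (-c y²)`, and translating `y` by at most `1` only
halves `c`; so, `φ` being bounded, both derivatives may be taken under the integral sign and the
heat equation passes from `G` to `u`. For the initial value, the substitution `ξ = x - √t z` gives
`u t x = ∫ φ (x - √t z) * G 1 z`, which tends to `φ x * ∫ G 1 = φ x` by dominated convergence.
-/

open MeasureTheory Real Filter Topology Set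

noncomputable section

def gaussianEnvelope (c y : ℝ) : ℝ := (1 + y ^ 2) * exp (-c * y ^ 2)

theorem integrable_gaussianEnvelope {c : ℝ} (hc : 0 < c) : Integrable (gaussianEnvelope c) := by
  have h2 : Integrable fun y : ℝ => y ^ 2 * exp (-c * y ^ 2) := by
    simpa using integrable_rpow_mul_exp_neg_mul_sq hc (s := 2) (by norm_num)
  refine ((integrable_exp_neg_mul_sq hc).add h2).congr (.of_forall fun y => ?_)
  simp only [gaussianEnvelope, Pi.add_apply]
  ring

theorem gaussianEnvelope_le_of_abs_sub_le {c a b : ℝ} (hc : 0 ≤ c) (hab : |a - b| ≤ 1) :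
    gaussianEnvelope c a ≤ 3 * exp c * gaussianEnvelope (c / 2) b := by
  have hsq : (a - b) ^ 2 ≤ 1 := by nlinarith [sq_abs (a - b), abs_nonneg (a - b)]
  have hpoly : 1 + a ^ 2 ≤ 3 * (1 + b ^ 2) := by nlinarith [sq_nonneg (a - 2 * b)]
  have hexp : exp (-c * a ^ 2) ≤ exp c * exp (-(c / 2) * b ^ 2) := by
    rw [← exp_add, exp_le_exp]
    nlinarith [sq_nonneg (a + (a - b))]
  calc (1 + a ^ 2) * exp (-c * a ^ 2)
      ≤ (3 * (1 + b ^ 2)) * (exp c * exp (-(c / 2) * b ^ 2)) := by gcongr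
    _ = 3 * exp c * gaussianEnvelope (c / 2) b := by unfold gaussianEnvelope; ring

theorem hasDerivAt_integral_mul_of_dominated {α : Type*} [MeasurableSpace α] {μ : Measure α}
    {φ : α → ℝ} {C : ℝ} (hφ : AEStronglyMeasurable φ μ) (hC : ∀ ξ, |φ ξ| ≤ C)
    {K K' : ℝ → α → ℝ} {p₀ : ℝ} {s : Set ℝ} (hs : s ∈ 𝓝 p₀)
    {g : α → ℝ} (hg : Integrable g μ) (hK : ∀ p ∈ s, AEStronglyMeasurable (K p) μ)
    (hK₀ : Integrable (K p₀) μ) (hK'₀ : AEStronglyMeasurable (K' p₀) μ)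
    (h_diff : ∀ p ∈ s, ∀ ξ, HasDerivAt (K · ξ) (K' p ξ) p)
    (h_bound : ∀ p ∈ s, ∀ ξ, |K' p ξ| ≤ g ξ) :
    HasDerivAt (fun p => ∫ ξ, φ ξ * K p ξ ∂μ) (∫ ξ, φ ξ * K' p₀ ξ ∂μ) p₀ := by
  refine (hasDerivAt_integral_of_dominated_loc_of_deriv_le (bound := fun ξ => C * g ξ) hs
    (eventually_of_mem hs fun p hp => hφ.mul (hK p hp)) (hK₀.bdd_mul hφ (.of_forall hC))
    (hφ.mul hK'₀) (.of_forall fun ξ p hp => ?_) (hg.const_mul C)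
    (.of_forall fun ξ p hp => (h_diff p hp ξ).const_mul (φ ξ))).2
  rw [norm_mul, Real.norm_eq_abs, Real.norm_eq_abs]
  exact mul_le_mul (hC ξ) (h_bound p hp ξ) (abs_nonneg _) ((abs_nonneg _).trans (hC ξ))

theorem hasDerivAt_integral_mul_comp_sub {φ : ℝ → ℝ} {C : ℝ} (hφ : AEStronglyMeasurable φ)
    (hC : ∀ ξ, |φ ξ| ≤ C) {k k' : ℝ → ℝ} {c M M' : ℝ} (hc : 0 < c)
    (hk : ∀ y, HasDerivAt k (k' y) y) (hk_le : ∀ y, |k y| ≤ M * gaussianEnvelope c y)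
    (hk'_le : ∀ y, |k' y| ≤ M' * gaussianEnvelope c y) (x₀ : ℝ) :
    HasDerivAt (fun x => ∫ ξ, φ ξ * k (x - ξ)) (∫ ξ, φ ξ * k' (x₀ - ξ)) x₀ := by
  have hM' : 0 ≤ M' := by simpa [gaussianEnvelope] using (abs_nonneg _).trans (hk'_le 0)
  have hk_cont : Continuous k := continuous_iff_continuousAt.2 fun y => (hk y).continuousAt
  have hk'_meas : Measurable k' := by
    rw [show k' = deriv k from funext fun y => (hk y).deriv.symm]
    exact measurable_deriv k
  have henv : ∀ c' > 0, Integrable fun ξ => gaussianEnvelope c' (x₀ - ξ) := fun c' hc' =>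
    (integrable_gaussianEnvelope hc').comp_sub_left x₀
  refine hasDerivAt_integral_mul_of_dominated (K := fun p ξ => k (p - ξ))
    (K' := fun p ξ => k' (p - ξ)) hφ hC (Metric.closedBall_mem_nhds x₀ one_pos)
    (((henv (c / 2) (by positivity)).const_mul (3 * exp c)).const_mul M')
    (fun p _ => (hk_cont.comp (continuous_const.sub continuous_id)).aestronglyMeasurable)
    (((henv c hc).const_mul M).mono'
      (hk_cont.comp (continuous_const.sub continuous_id)).aestronglyMeasurable
      (.of_forall fun ξ => hk_le _))
    (hk'_meas.comp (measurable_const.sub measurable_id)).aestronglyMeasurable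
    (fun p _ ξ => ?_) (fun p hp ξ => ?_)
  · exact ((hk (p - ξ)).comp p ((hasDerivAt_id p).sub_const ξ)).congr_deriv (mul_one _)
  · refine (hk'_le _).trans (mul_le_mul_of_nonneg_left ?_ hM')
    refine gaussianEnvelope_le_of_abs_sub_le hc.le ?_
    rw [sub_sub_sub_cancel_right, ← Real.dist_eq]
    exact Metric.mem_closedBall.1 hp

def heatKernel (t y : ℝ) : ℝ := (√(4 * π * t))⁻¹ * exp (-y ^ 2 / (4 * t))

def heatKernelDeriv (t y : ℝ) : ℝ := -(y / (2 * t)) * heatKernel t y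

def heatKernelDeriv2 (t y : ℝ) : ℝ := (y ^ 2 / (4 * t ^ 2) - 1 / (2 * t)) * heatKernel t y

theorem heatKernel_nonneg (t y : ℝ) : 0 ≤ heatKernel t y := by
  unfold heatKernel; positivity

theorem hasDerivAt_heatKernel (t y : ℝ) : HasDerivAt (heatKernel t) (heatKernelDeriv t y) y := by
  refine ((((hasDerivAt_pow 2 y).fun_neg.div_const (4 * t)).exp.const_mul
    (√(4 * π * t))⁻¹)).congr_deriv ?_
  unfold heatKernelDeriv heatKernel
  ring

theorem hasDerivAt_heatKernelDeriv (t y : ℝ) :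
    HasDerivAt (heatKernelDeriv t) (heatKernelDeriv2 t y) y :=
  (((hasDerivAt_id y).div_const (2 * t)).fun_neg.mul (hasDerivAt_heatKernel t y)).congr_deriv
    (by unfold heatKernelDeriv2 heatKernelDeriv; simp only [id]; ring)

theorem continuous_heatKernel (t : ℝ) : Continuous (heatKernel t) :=
  continuous_iff_continuousAt.2 fun y => (hasDerivAt_heatKernel t y).continuousAt

theorem continuous_heatKernelDeriv2 (t : ℝ) : Continuous (heatKernelDeriv2 t) := by
  unfold heatKernelDeriv2
  have := continuous_heatKernel t
  fun_prop

theorem hasDerivAt_inv_sqrt_mul {a t : ℝ} (ha : 0 < a) (ht : 0 < t) :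
    HasDerivAt (fun s => (√(a * s))⁻¹) (-(1 / (2 * t)) * (√(a * t))⁻¹) t := by
  have hat : 0 < √(a * t) := sqrt_pos.2 (by positivity)
  refine ((((hasDerivAt_id t).const_mul a).sqrt (by positivity)).inv hat.ne').congr_deriv ?_
  simp only [id, mul_one]
  rw [sq_sqrt (by positivity)]
  field_simp

theorem hasDerivAt_heatKernel_time {t : ℝ} (ht : 0 < t) (y : ℝ) :
    HasDerivAt (fun s => heatKernel s y) (heatKernelDeriv2 t y) t := by
  have hexp : HasDerivAt (fun s => exp (-y ^ 2 / (4 * s)))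
      (exp (-y ^ 2 / (4 * t)) * (y ^ 2 / (4 * t ^ 2))) t := by
    have h := ((hasDerivAt_inv ht.ne').const_mul (-y ^ 2 / 4)).exp
    refine (h.congr_deriv ?_).congr_of_eventuallyEq (.of_forall fun s => ?_)
    · field_simp
    · ring_nf
  refine ((hasDerivAt_inv_sqrt_mul (by positivity : 0 < 4 * π) ht).mul hexp).congr_deriv ?_
  unfold heatKernelDeriv2 heatKernel
  ring

theorem heatKernel_le {t s : ℝ} (ht : 0 < t) (hs : s ∈ Icc (t / 2) (2 * t)) (y : ℝ) :
    heatKernel s y ≤ (√(2 * π * t))⁻¹ * exp (-(8 * t)⁻¹ * y ^ 2) := by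
  obtain ⟨hs₁, hs₂⟩ := hs
  have hsqrt : (√(4 * π * s))⁻¹ ≤ (√(2 * π * t))⁻¹ :=
    inv_anti₀ (sqrt_pos.2 (by positivity)) (sqrt_le_sqrt (by nlinarith [pi_pos]))
  have hexp : exp (-y ^ 2 / (4 * s)) ≤ exp (-(8 * t)⁻¹ * y ^ 2) := by
    rw [exp_le_exp, neg_div, neg_mul, ← div_eq_inv_mul, neg_le_neg_iff]
    exact div_le_div_of_nonneg_left (sq_nonneg y) (by linarith) (by linarith)
  exact mul_le_mul hsqrt hexp (exp_pos _).le (by positivity)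

theorem exists_abs_heatKernel_le_gaussianEnvelope {t : ℝ} (ht : 0 < t) :
    ∃ M, ∀ s ∈ Icc (t / 2) (2 * t), ∀ y,
      |heatKernel s y| ≤ M * gaussianEnvelope (8 * t)⁻¹ y ∧
      |heatKernelDeriv s y| ≤ M * gaussianEnvelope (8 * t)⁻¹ y ∧
      |heatKernelDeriv2 s y| ≤ M * gaussianEnvelope (8 * t)⁻¹ y := by
  obtain ⟨A, hA₁, hA₂, hA₃⟩ : ∃ A : ℝ, 1 ≤ A ∧ t⁻¹ ≤ A ∧ t⁻¹ ^ 2 + t⁻¹ ≤ A :=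
    ⟨(1 + t⁻¹) ^ 2, by nlinarith [inv_pos.2 ht], by nlinarith [inv_pos.2 ht],
      by nlinarith [inv_pos.2 ht]⟩
  refine ⟨A * (√(2 * π * t))⁻¹, fun s hs y => ?_⟩
  have hs₀ : 0 < s := by linarith [hs.1]
  have hinv : (2 * s)⁻¹ ≤ t⁻¹ := inv_anti₀ ht (by linarith [hs.1])
  have hy : |y| ≤ 1 + y ^ 2 := by nlinarith [sq_abs y, sq_nonneg (|y| - 1)]
  have key : ∀ p : ℝ, |p| ≤ A * (1 + y ^ 2) →
      |p * heatKernel s y| ≤ A * (√(2 * π * t))⁻¹ * gaussianEnvelope (8 * t)⁻¹ y := by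
    intro p hp
    rw [abs_mul, abs_of_nonneg (heatKernel_nonneg s y)]
    calc |p| * heatKernel s y
        ≤ A * (1 + y ^ 2) * ((√(2 * π * t))⁻¹ * exp (-(8 * t)⁻¹ * y ^ 2)) :=
          mul_le_mul hp (heatKernel_le ht hs y) (heatKernel_nonneg s y) (by positivity)
      _ = A * (√(2 * π * t))⁻¹ * gaussianEnvelope (8 * t)⁻¹ y := by
          rw [gaussianEnvelope]; ring
  refine ⟨by simpa using key 1 (by rw [abs_one]; nlinarith), key _ ?_, key _ ?_⟩
  · rw [abs_neg, abs_div, abs_of_pos (by positivity : (0 : ℝ) < 2 * s), div_eq_mul_inv]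
    nlinarith [mul_le_mul hy hinv (by positivity) (by positivity)]
  · have h1 : y ^ 2 / (4 * s ^ 2) ≤ t⁻¹ ^ 2 * y ^ 2 := by
      rw [show y ^ 2 / (4 * s ^ 2) = (2 * s)⁻¹ ^ 2 * y ^ 2 by field_simp; ring]
      gcongr
    have h2 : 1 / (2 * s) ≤ t⁻¹ := by rwa [one_div]
    rw [abs_le]
    constructor <;> nlinarith [sq_nonneg y, inv_pos.2 ht,
      (by positivity : 0 ≤ y ^ 2 / (4 * s ^ 2)), (by positivity : 0 ≤ 1 / (2 * s))]

theorem integral_heatKernel {t : ℝ} (ht : 0 < t) : ∫ y, heatKernel t y = 1 := by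
  have h : ∀ y : ℝ, -y ^ 2 / (4 * t) = -(4 * t)⁻¹ * y ^ 2 := fun y => by ring
  simp_rw [heatKernel, h, integral_const_mul, integral_gaussian, div_inv_eq_mul,
    show π * (4 * t) = 4 * π * t by ring]
  exact inv_mul_cancel₀ (sqrt_pos.2 (by positivity)).ne'

theorem integrable_heatKernel {t : ℝ} (ht : 0 < t) : Integrable (heatKernel t) :=
  integrable_of_integral_eq_one (integral_heatKernel ht)

theorem heatKernel_sqrt_mul {t : ℝ} (ht : 0 < t) (z : ℝ) :
    heatKernel t (√t * z) = (√t)⁻¹ * heatKernel 1 z := by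
  have hst : 0 < √t := sqrt_pos.2 ht
  have hsq : √t ^ 2 = t := sq_sqrt ht.le
  unfold heatKernel
  rw [mul_one, sqrt_mul (by positivity) t, mul_pow, hsq]
  field_simp

theorem integral_mul_heatKernel_eq (φ : ℝ → ℝ) {t : ℝ} (ht : 0 < t) (x : ℝ) :
    ∫ ξ, φ ξ * heatKernel t (x - ξ) = ∫ z, φ (x - √t * z) * heatKernel 1 z := by
  have hst : 0 < √t := sqrt_pos.2 ht
  have h := Measure.integral_comp_mul_left (fun ξ => φ (x - ξ) * heatKernel t ξ) √t
  simp only [heatKernel_sqrt_mul ht, mul_left_comm _ (√t)⁻¹, integral_const_mul, abs_inv,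
    abs_of_pos hst, smul_eq_mul] at h
  rw [← integral_sub_left_eq_self _ volume x, mul_left_cancel₀ (inv_ne_zero hst.ne') h]
  simp only [sub_sub_cancel]

theorem tendsto_integral_comp_sub_mul {φ ρ : ℝ → ℝ} {C : ℝ} (hφ : Continuous φ)
    (hC : ∀ x, |φ x| ≤ C) (hρ : Integrable ρ) (x : ℝ) :
    Tendsto (fun r => ∫ z, φ (x - r * z) * ρ z) (𝓝 0) (𝓝 (φ x * ∫ z, ρ z)) := by
  rw [← integral_const_mul]
  refine tendsto_integral_filter_of_dominated_convergence (fun z => C * |ρ z|)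
    (.of_forall fun r => ?_) (.of_forall fun r => .of_forall fun z => ?_) (hρ.abs.const_mul C)
    (.of_forall fun z => ?_)
  · exact ((hφ.comp (by fun_prop)).aestronglyMeasurable).mul hρ.aestronglyMeasurable
  · rw [norm_mul, Real.norm_eq_abs, Real.norm_eq_abs]
    exact mul_le_mul_of_nonneg_right (hC _) (abs_nonneg _)
  · have hcont : Continuous fun r : ℝ => x - r * z := by fun_prop
    simpa using ((hφ.tendsto x).comp (by simpa using hcont.tendsto 0)).mul_const (ρ z)

section Differentiation

variable {φ : ℝ → ℝ} {C : ℝ} (hφ : AEStronglyMeasurable φ) (hC : ∀ ξ, |φ ξ| ≤ C)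
  {t : ℝ} (ht : 0 < t)
include hφ hC ht

theorem hasDerivAt_integral_mul_heatKernel (x : ℝ) :
    HasDerivAt (fun x => ∫ ξ, φ ξ * heatKernel t (x - ξ))
      (∫ ξ, φ ξ * heatKernelDeriv t (x - ξ)) x := by
  obtain ⟨M, hM⟩ := exists_abs_heatKernel_le_gaussianEnvelope ht
  have ht_mem : t ∈ Icc (t / 2) (2 * t) := ⟨by linarith, by linarith⟩
  exact hasDerivAt_integral_mul_comp_sub hφ hC (by positivity) (hasDerivAt_heatKernel t)
    (fun y => (hM t ht_mem y).1) (fun y => (hM t ht_mem y).2.1) x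

theorem hasDerivAt_integral_mul_heatKernelDeriv (x : ℝ) :
    HasDerivAt (fun x => ∫ ξ, φ ξ * heatKernelDeriv t (x - ξ))
      (∫ ξ, φ ξ * heatKernelDeriv2 t (x - ξ)) x := by
  obtain ⟨M, hM⟩ := exists_abs_heatKernel_le_gaussianEnvelope ht
  have ht_mem : t ∈ Icc (t / 2) (2 * t) := ⟨by linarith, by linarith⟩
  exact hasDerivAt_integral_mul_comp_sub hφ hC (by positivity) (hasDerivAt_heatKernelDeriv t)
    (fun y => (hM t ht_mem y).2.1) (fun y => (hM t ht_mem y).2.2) x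

theorem hasDerivAt_integral_mul_heatKernel_time (x : ℝ) :
    HasDerivAt (fun s => ∫ ξ, φ ξ * heatKernel s (x - ξ))
      (∫ ξ, φ ξ * heatKernelDeriv2 t (x - ξ)) t := by
  obtain ⟨M, hM⟩ := exists_abs_heatKernel_le_gaussianEnvelope ht
  have henv := ((integrable_gaussianEnvelope (c := (8 * t)⁻¹) (by positivity)).comp_sub_left
    x).const_mul M
  refine hasDerivAt_integral_mul_of_dominated (K := fun s ξ => heatKernel s (x - ξ))
    (K' := fun s ξ => heatKernelDeriv2 s (x - ξ)) hφ hC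
    (Icc_mem_nhds (by linarith) (by linarith)) henv
    (fun s _ => ((continuous_heatKernel s).comp (by fun_prop)).aestronglyMeasurable)
    (henv.mono' ((continuous_heatKernel t).comp (by fun_prop)).aestronglyMeasurable
      (.of_forall fun ξ => (hM t ⟨by linarith, by linarith⟩ _).1))
    ((continuous_heatKernelDeriv2 t).comp (by fun_prop)).aestronglyMeasurable
    (fun s hs ξ => hasDerivAt_heatKernel_time (by linarith [hs.1]) _)
    (fun s hs ξ => (hM s hs _).2.2)

end Differentiation

theorem tendsto_integral_mul_heatKernel {φ : ℝ → ℝ} {C : ℝ} (hφ : Continuous φ)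
    (hC : ∀ x, |φ x| ≤ C) (x : ℝ) :
    Tendsto (fun t => ∫ ξ, φ ξ * heatKernel t (x - ξ)) (𝓝[>] 0) (𝓝 (φ x)) := by
  have hsqrt : Tendsto (fun t => √t) (𝓝[>] 0) (𝓝 0) :=
    (continuous_sqrt.tendsto' 0 0 sqrt_zero).mono_left nhdsWithin_le_nhds
  have hlim :=
    (tendsto_integral_comp_sub_mul hφ hC (integrable_heatKernel one_pos) x).comp hsqrt
  rw [integral_heatKernel one_pos, mul_one] at hlim
  exact hlim.congr' (eventually_nhdsWithin_of_forall fun t ht =>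
    (integral_mul_heatKernel_eq φ ht x).symm)

end

/-- Poisson's formula for the Cauchy problem of the one-dimensional heat
equation: convolution with the heat kernel solves `∂_t u = ∂²_x u` and attains
the bounded continuous initial datum pointwise. -/
theorem heat_equation_poisson_formula (φ : ℝ → ℝ)
    (hφc : Continuous φ) (hφb : ∃ C : ℝ, ∀ x : ℝ, |φ x| ≤ C)
    (u : ℝ → ℝ → ℝ)
    (hu : ∀ t x : ℝ, 0 < t → u t x =
      (Real.sqrt (4 * Real.pi * t))⁻¹ * ∫ ξ : ℝ, φ ξ * Real.exp (-(x - ξ) ^ 2 / (4 * t))) :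
    (∀ t x : ℝ, 0 < t →
      deriv (fun s => u s x) t = deriv (fun y => deriv (fun y' => u t y') y) x) ∧
    ∀ x : ℝ, Filter.Tendsto (fun t => u t x) (nhdsWithin 0 (Set.Ioi 0)) (nhds (φ x)) := by
  obtain ⟨C, hC⟩ := hφb
  have hu' : ∀ t x, 0 < t → u t x = ∫ ξ, φ ξ * heatKernel t (x - ξ) := fun t x ht => by
    simp only [hu t x ht, heatKernel, ← integral_const_mul, mul_left_comm]
  have hφ : AEStronglyMeasurable φ := hφc.aestronglyMeasurable
  refine ⟨fun t x ht => ?_, fun x => ?_⟩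
  · have hux : deriv (u t) = fun y => ∫ ξ, φ ξ * heatKernelDeriv t (y - ξ) := by
      rw [funext (hu' t · ht)]
      exact funext fun y => (hasDerivAt_integral_mul_heatKernel hφ hC ht y).deriv
    have hut := (hasDerivAt_integral_mul_heatKernel_time hφ hC ht x).congr_of_eventuallyEq
      ((eventually_gt_nhds ht).mono fun s hs => hu' s x hs)
    rw [hut.deriv, hux, (hasDerivAt_integral_mul_heatKernelDeriv hφ hC ht x).deriv]
  · exact (tendsto_integral_mul_heatKernel hφc hC x).congr'
      (eventually_nhdsWithin_of_forall fun t ht => (hu' t x ht).symm)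
end
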